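/- (OST success probability, Lemma 1) Let Π = supp(α) be a uniformly random k-subset of {1,…,C}, suppose Φ satisfies the (k,ε,δ)-StOC, and let the noise η ~ CN(0,σ²I) be independent of Π. Choose threshold λ = 2 max{ε, 2√(σ² log C)} and assume α_min > 2λ and ‖α‖_2 = 1. Then the OST estimate Ŝ = {i : |(Φᴴ(Φα+η))_i| > λ} satisfies Pr(Ŝ ≠ Π) ≤ δ + 2(√(2π log C) · C)^{−1}. -/

import Mathlib

/-! On the event that the StOC inequalities hold for the drawn support and every noise
correlation `|⟨φ_i, η⟩|` is at most `2√(σ² log C)`, the correlations `|(Φᴴy)_i|` are at most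
`ε + 2√(σ² log C) ≤ λ` off the support and at least `α_min - λ > λ` on it, so thresholding at `λ`
recovers the support exactly. The StOC event fails with probability at most `δ`. Since the
columns have unit norm, the real and imaginary parts of each `⟨φ_i, η⟩` are `N(0, σ²/2)`, and
Mills' ratio bound with a union bound over the `2C` of them gives the second term. -/

open Finset

/-- Inner product between columns `a` and `b` of `Φ`: `⟨φ_a, φ_b⟩ = ∑_n conj(Φ n a) * Φ n b`. -/
noncomputable def colIP {N C : ℕ} (Φ : Matrix (Fin N) (Fin C) ℂ) (a b : Fin C) : ℂ :=
  ∑ n, (starRingEnd ℂ) (Φ n a) * Φ n b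

/-- Worst-case coherence `μ = max_{i ≠ j} |⟨φ_i, φ_j⟩|`. -/
noncomputable def wcoh {N C : ℕ} (Φ : Matrix (Fin N) (Fin C) ℂ) : ℝ :=
  ⨆ p : {p : Fin C × Fin C // p.1 ≠ p.2}, ‖colIP Φ p.1.1 p.1.2‖

/-- Average coherence `ν = (1/(C−1)) max_i |∑_{j ≠ i} ⟨φ_i, φ_j⟩|`. -/
noncomputable def acoh {N C : ℕ} (Φ : Matrix (Fin N) (Fin C) ℂ) : ℝ :=
  (1 / ((C : ℝ) - 1)) *
    ⨆ i : Fin C, ‖∑ j ∈ Finset.univ.filter (fun j => j ≠ i), colIP Φ i j‖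

open MeasureTheory ProbabilityTheory

instance {n : ℕ} : MeasurableSpace (Fin n) := ⊤

/-- The circularly-symmetric complex Gaussian measure `CN(0, v)` on `ℂ`. -/
noncomputable def complexGaussian (v : NNReal) : Measure ℂ :=
  ((gaussianReal 0 (v / 2)).prod (gaussianReal 0 (v / 2))).map
    (fun p => (p.1 : ℂ) + p.2 * Complex.I)

open scoped NNReal ENNReal

namespace ProbabilityTheory

lemma map_finsetSum_eq_gaussianReal_of_iIndepFun {ι Ω : Type*} {mΩ : MeasurableSpace Ω}
    {P : Measure Ω} [IsProbabilityMeasure P] {X : ι → Ω → ℝ} (hindep : iIndepFun X P)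
    (hX : ∀ i, Measurable (X i)) {m : ι → ℝ} {v : ι → ℝ≥0}
    (hlaw : ∀ i, P.map (X i) = gaussianReal (m i) (v i)) (s : Finset ι) :
    P.map (∑ i ∈ s, X i) = gaussianReal (∑ i ∈ s, m i) (∑ i ∈ s, v i) := by
  classical
  induction s using Finset.induction_on with
  | empty =>
    rw [Finset.sum_empty, Finset.sum_empty, Finset.sum_empty, gaussianReal_zero_var]
    exact Measure.map_const P 0 |>.trans (by simp)
  | insert i s hi ih =>
    simp only [Finset.sum_insert hi]
    rw [add_comm (X i), add_comm (m i), add_comm (v i)]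
    exact gaussianReal_add_gaussianReal_of_indepFun
      (hindep.indepFun_finsetSum_of_notMem hX hi) ih (hlaw i)

lemma pi_map_sum_eq_gaussianReal {ι : Type*} [Fintype ι] {Ω : ι → Type*}
    [∀ i, MeasurableSpace (Ω i)] {μ : ∀ i, Measure (Ω i)} [∀ i, IsProbabilityMeasure (μ i)]
    {f : ∀ i, Ω i → ℝ} (hf : ∀ i, Measurable (f i)) {m : ι → ℝ} {v : ι → ℝ≥0}
    (hlaw : ∀ i, (μ i).map (f i) = gaussianReal (m i) (v i)) :
    (Measure.pi μ).map (fun x => ∑ i, f i (x i)) = gaussianReal (∑ i, m i) (∑ i, v i) := by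
  have hlaw' : ∀ i, (Measure.pi μ).map (fun x => f i (x i)) = gaussianReal (m i) (v i) :=
    fun i => by
      rw [← hlaw i, ← (measurePreserving_eval μ i).map_eq,
        Measure.map_map (hf i) (measurable_pi_apply i)]
      rfl
  convert map_finsetSum_eq_gaussianReal_of_iIndepFun
    (iIndepFun_pi fun i => (hf i).aemeasurable) (fun i => (hf i).comp (measurable_pi_apply i))
    hlaw' Finset.univ using 2
  ext x
  simp

lemma gaussianReal_prod_map_linear (v : ℝ≥0) (a b : ℝ) :
    ((gaussianReal 0 v).prod (gaussianReal 0 v)).map (fun p => a * p.1 + b * p.2) =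
      gaussianReal 0 (.mk (a ^ 2 + b ^ 2) (by positivity) * v) := by
  have hsplit : (fun p : ℝ × ℝ => a * p.1 + b * p.2) =
      (fun q : ℝ × ℝ => q.1 + q.2) ∘ Prod.map (a * ·) (b * ·) := rfl
  rw [hsplit, ← Measure.map_map (by fun_prop) (by fun_prop),
    ← Measure.map_prod_map _ _ (by fun_prop) (by fun_prop),
    gaussianReal_map_const_mul, gaussianReal_map_const_mul]
  change gaussianReal _ _ ∗ gaussianReal _ _ = _
  rw [gaussianReal_conv_gaussianReal]
  congr 1
  · simp
  · ext; push_cast; ring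

lemma complexGaussian_map_re_mul (v : ℝ≥0) (c : ℂ) :
    (complexGaussian v).map (fun w => (c * w).re) = gaussianReal 0 (‖c‖₊ ^ 2 * (v / 2)) := by
  rw [complexGaussian, Measure.map_map (by fun_prop) (by fun_prop)]
  convert gaussianReal_prod_map_linear (v / 2) c.re (-c.im) using 2
  · ext p; simp [sub_eq_add_neg]
  · ext
    push_cast
    rw [Complex.sq_norm, Complex.normSq_apply]
    ring

open Real Set Filter

lemma integral_Ioi_mul_exp_neg_sq_div {v : ℝ} (hv : 0 < v) {s : ℝ} (hs : 0 ≤ s) :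
    IntegrableOn (fun x => x * exp (-x ^ 2 / (2 * v))) (Ioi s) ∧
      ∫ x in Ioi s, x * exp (-x ^ 2 / (2 * v)) = v * exp (-s ^ 2 / (2 * v)) := by
  have hderiv : ∀ x ∈ Ici s, HasDerivAt (fun x => -v * exp (-x ^ 2 / (2 * v)))
      (x * exp (-x ^ 2 / (2 * v))) x := fun x _ => by
    refine ((((hasDerivAt_pow 2 x).neg.div_const (2 * v)).exp).const_mul (-v)).congr_deriv ?_
    simp only [Pi.neg_apply]
    field_simp
    ring
  have hnonneg : ∀ x ∈ Ioi s, 0 ≤ x * exp (-x ^ 2 / (2 * v)) := fun x hx =>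
    mul_nonneg (hs.trans hx.out.le) (exp_nonneg _)
  have hlim : Tendsto (fun x => -v * exp (-x ^ 2 / (2 * v))) atTop (nhds 0) := by
    simpa using (tendsto_exp_atBot.comp ((tendsto_neg_atBot_iff.mpr
      (tendsto_pow_atTop two_ne_zero)).atBot_div_const (by positivity))).const_mul (-v)
  refine ⟨integrableOn_Ioi_deriv_of_nonneg' hderiv hnonneg hlim, ?_⟩
  rw [integral_Ioi_of_hasDerivAt_of_nonneg' hderiv hnonneg hlim]
  ring

/-- Mills' ratio bound, from `1 ≤ x / s` on `(s, ∞)`. -/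
lemma gaussianReal_Ioi_le {v : ℝ≥0} (hv : v ≠ 0) {s : ℝ} (hs : 0 < s) :
    gaussianReal 0 v (Ioi s) ≤
      ENNReal.ofReal (√v / (s * √(2 * π)) * exp (-s ^ 2 / (2 * v))) := by
  have hv' : (0 : ℝ) < v := NNReal.coe_pos.mpr (pos_iff_ne_zero.mpr hv)
  obtain ⟨hint, hval⟩ := integral_Ioi_mul_exp_neg_sq_div hv' hs.le
  have hpdf : (fun x => x / s * gaussianPDFReal 0 v x) =
      fun x => (√(2 * π * v))⁻¹ / s * (x * exp (-x ^ 2 / (2 * v))) := by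
    ext x
    simp only [gaussianPDFReal, sub_zero]
    ring
  rw [gaussianReal_apply_eq_integral _ hv]
  refine ENNReal.ofReal_le_ofReal ?_
  calc ∫ x in Ioi s, gaussianPDFReal 0 v x
      ≤ ∫ x in Ioi s, x / s * gaussianPDFReal 0 v x := by
        refine setIntegral_mono_on (integrable_gaussianPDFReal 0 v).integrableOn
          (hpdf ▸ hint.const_mul _) measurableSet_Ioi fun x hx => ?_
        exact le_mul_of_one_le_left (gaussianPDFReal_nonneg _ _ _)
          ((one_le_div hs).mpr hx.out.le)
    _ = √v / (s * √(2 * π)) * exp (-s ^ 2 / (2 * v)) := by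
        rw [hpdf, integral_const_mul, hval, sqrt_mul (by positivity) (v : ℝ)]
        have hsq : √(v : ℝ) ^ 2 = v := sq_sqrt hv'.le
        have : 0 < √(v : ℝ) := sqrt_pos.mpr hv'
        field_simp
        rw [hsq]

lemma gaussianReal_lt_abs_le {v : ℝ≥0} (hv : v ≠ 0) {s : ℝ} (hs : 0 < s) :
    gaussianReal 0 v {x | s < |x|} ≤
      ENNReal.ofReal (2 * (√v / (s * √(2 * π)) * exp (-s ^ 2 / (2 * v)))) := by
  have hsymm : gaussianReal 0 v (Iio (-s)) = gaussianReal 0 v (Ioi s) := by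
    conv_lhs => rw [← neg_zero, ← gaussianReal_map_neg]
    rw [Measure.map_apply measurable_neg measurableSet_Iio]
    congr 1
    ext x
    simp
  have hsplit : {x : ℝ | s < |x|} = Iio (-s) ∪ Ioi s := by
    ext x
    simp [lt_abs, or_comm, lt_neg]
  rw [hsplit, two_mul, ENNReal.ofReal_add (by positivity) (by positivity)]
  refine (measure_union_le _ _).trans ?_
  rw [hsymm]
  exact add_le_add (gaussianReal_Ioi_le hv hs) (gaussianReal_Ioi_le hv hs)

lemma measure_sqrt_two_mul_lt_norm_le {Ω : Type*} {mΩ : MeasurableSpace Ω} {P : Measure Ω}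
    {Z : Ω → ℂ} (hZ : Measurable Z) {v : ℝ≥0} (hv : v ≠ 0)
    (hre : P.map (fun ω => (Z ω).re) = gaussianReal 0 v)
    (him : P.map (fun ω => (Z ω).im) = gaussianReal 0 v) {s : ℝ} (hs : 0 < s) :
    P {ω | √2 * s < ‖Z ω‖} ≤
      ENNReal.ofReal (4 * (√v / (s * √(2 * π)) * exp (-s ^ 2 / (2 * v)))) := by
  have hcover : {ω | √2 * s < ‖Z ω‖} ⊆
      (fun ω => (Z ω).re) ⁻¹' {x | s < |x|} ∪ (fun ω => (Z ω).im) ⁻¹' {x | s < |x|} := by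
    intro ω hω
    by_contra hsmall
    simp only [Set.mem_union, Set.mem_preimage, Set.mem_ofPred_eq, not_or, not_lt] at hsmall
    refine hω.out.not_ge ((Complex.norm_le_sqrt_two_mul_max (Z ω)).trans ?_)
    exact mul_le_mul_of_nonneg_left (max_le hsmall.1 hsmall.2) (sqrt_nonneg 2)
  have hmeas : MeasurableSet {x : ℝ | s < |x|} := measurableSet_lt measurable_const measurable_abs
  refine (measure_mono hcover).trans ((measure_union_le _ _).trans ?_)
  rw [← Measure.map_apply (by fun_prop) hmeas, ← Measure.map_apply (by fun_prop) hmeas, hre, him,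
    show (4 : ℝ) = 2 + 2 by norm_num, add_mul, ENNReal.ofReal_add (by positivity) (by positivity)]
  exact add_le_add (gaussianReal_lt_abs_le hv hs) (gaussianReal_lt_abs_le hv hs)

instance isProbabilityMeasure_complexGaussian (v : ℝ≥0) :
    IsProbabilityMeasure (complexGaussian v) :=
  Measure.isProbabilityMeasure_map (by fun_prop)

lemma pi_complexGaussian_map_re_sum_mul {ι : Type*} [Fintype ι] (v : ℝ≥0) (c : ι → ℂ) :
    (Measure.pi fun _ : ι => complexGaussian v).map (fun η => (∑ n, c n * η n).re) =
      gaussianReal 0 ((∑ n, ‖c n‖₊ ^ 2) * (v / 2)) := by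
  simp_rw [Complex.re_sum, Finset.sum_mul]
  convert pi_map_sum_eq_gaussianReal (fun n => by fun_prop)
    (fun n => complexGaussian_map_re_mul v (c n)) using 2
  simp

lemma pi_complexGaussian_sqrt_two_mul_lt_norm_sum_le {ι : Type*} [Fintype ι] {v : ℝ≥0}
    (hv : v ≠ 0) {c : ι → ℂ} (hc : ∑ n, ‖c n‖ ^ 2 = 1) {s : ℝ} (hs : 0 < s) :
    (Measure.pi fun _ : ι => complexGaussian v) {η | √2 * s < ‖∑ n, c n * η n‖} ≤
      ENNReal.ofReal (4 * (√(v / 2) / (s * √(2 * π)) * exp (-s ^ 2 / v))) := by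
  have hc' : ∑ n, ‖c n‖₊ ^ 2 = 1 := NNReal.coe_inj.mp (by push_cast; exact hc)
  have hre := pi_complexGaussian_map_re_sum_mul v c
  have him := pi_complexGaussian_map_re_sum_mul v (fun n => -Complex.I * c n)
  simp only [nnnorm_mul, nnnorm_neg, Complex.nnnorm_I, one_mul, hc'] at hre him
  have him' : (Measure.pi fun _ : ι => complexGaussian v).map
      (fun η => (∑ n, c n * η n).im) = gaussianReal 0 (v / 2) := by
    rw [← him]
    congr 1
    ext η
    simp [mul_assoc, ← Finset.mul_sum]
  convert measure_sqrt_two_mul_lt_norm_le (by fun_prop) (div_ne_zero hv two_ne_zero)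
    hre him' hs using 4
  · push_cast; rfl
  · push_cast; congr 1; ring

end ProbabilityTheory

lemma sum_norm_sq_eq_one_of_colIP_self {N C : ℕ} {Φ : Matrix (Fin N) (Fin C) ℂ} {i : Fin C}
    (hunit : colIP Φ i i = 1) : ∑ n, ‖Φ n i‖ ^ 2 = 1 := by
  have h : ((∑ n, ‖Φ n i‖ ^ 2 : ℝ) : ℂ) = 1 := by
    rw [← hunit, colIP]
    push_cast
    simp_rw [Complex.conj_mul']
  exact_mod_cast h

/-- Mills' bound for `N(0, σ²/2)` at `s = √(2σ² log C)`, where `e^{-s²/σ²} = C⁻²`. -/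
lemma four_mul_tail_bound_eq {C : ℕ} (hC : 2 ≤ C) {σ2 : ℝ} (hσ : 0 < σ2) :
    4 * (√(σ2 / 2) / (√2 * √(σ2 * Real.log C) * √(2 * Real.pi)) *
        Real.exp (-(√2 * √(σ2 * Real.log C)) ^ 2 / σ2)) =
      2 / (√(2 * Real.pi * Real.log C) * C) / C := by
  have hC1 : (1 : ℝ) < C := by exact_mod_cast hC
  have hL : 0 < Real.log C := Real.log_pos hC1
  have hexp : Real.exp (-(√2 * √(σ2 * Real.log C)) ^ 2 / σ2) = ((C : ℝ) ^ 2)⁻¹ := by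
    rw [mul_pow, Real.sq_sqrt zero_le_two, Real.sq_sqrt (by positivity),
      show -(2 * (σ2 * Real.log C)) / σ2 = -(2 * Real.log C) by field_simp, Real.exp_neg,
      show 2 * Real.log C = Real.log C + Real.log C by ring, Real.exp_add,
      Real.exp_log (by positivity), sq]
  rw [hexp, Real.sqrt_div hσ.le, Real.sqrt_mul hσ.le,
    Real.sqrt_mul (by positivity : (0 : ℝ) ≤ 2 * Real.pi), Real.sqrt_mul zero_le_two]
  have h2 : √(2 : ℝ) ^ 2 = 2 := Real.sq_sqrt zero_le_two
  have : 0 < √σ2 := Real.sqrt_pos.mpr hσ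
  have : 0 < √(Real.log C) := Real.sqrt_pos.mpr hL
  have : 0 < √Real.pi := Real.sqrt_pos.mpr Real.pi_pos
  field_simp
  rw [h2]
  ring

lemma pi_complexGaussian_exists_lt_norm_le {N C : ℕ} (hC : 2 ≤ C)
    {Φ : Matrix (Fin N) (Fin C) ℂ} (hunit : ∀ i, colIP Φ i i = 1) {σ2 : ℝ≥0} (hσ : 0 < σ2) :
    (Measure.pi fun _ : Fin N => complexGaussian σ2)
      {η | ∃ i : Fin C, 2 * √((σ2 : ℝ) * Real.log C) < ‖∑ n, (starRingEnd ℂ) (Φ n i) * η n‖} ≤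
      ENNReal.ofReal (2 / (√(2 * Real.pi * Real.log C) * C)) := by
  have hL : 0 < Real.log C := Real.log_pos (by exact_mod_cast hC)
  have hσ' : (0 : ℝ) < σ2 := hσ
  have hcol : ∀ i : Fin C, (Measure.pi fun _ : Fin N => complexGaussian σ2)
      {η | 2 * √((σ2 : ℝ) * Real.log C) < ‖∑ n, (starRingEnd ℂ) (Φ n i) * η n‖} ≤
      ENNReal.ofReal (2 / (√(2 * Real.pi * Real.log C) * C) / C) := fun i => by
    rw [← four_mul_tail_bound_eq hC hσ', show 2 * √((σ2 : ℝ) * Real.log C) =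
      √2 * (√2 * √(σ2 * Real.log C)) by rw [← mul_assoc, Real.mul_self_sqrt zero_le_two]]
    exact pi_complexGaussian_sqrt_two_mul_lt_norm_sum_le hσ.ne'
      (by simpa only [Complex.norm_conj] using sum_norm_sq_eq_one_of_colIP_self (hunit i))
      (by positivity)
  rw [Set.ofPred_exists]
  refine (measure_iUnion_fintype_le _ _).trans ((Finset.sum_le_sum fun i _ => hcol i).trans ?_)
  rw [Finset.sum_const, Finset.card_univ, Fintype.card_fin, nsmul_eq_mul,
    ← ENNReal.ofReal_natCast, ← ENNReal.ofReal_mul (Nat.cast_nonneg C)]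
  refine ENNReal.ofReal_le_ofReal (le_of_eq ?_)
  have : (0 : ℝ) < C := by positivity
  field_simp

lemma MeasureTheory.Measure.prod_le_add_of_forall_notMem {α β : Type*} [MeasurableSpace α]
    [MeasurableSpace β] {μ : Measure α} {ν : Measure β} [IsProbabilityMeasure μ]
    [IsProbabilityMeasure ν] {S : Set (α × β)} {A : Set α} {B : Set β}
    (h : ∀ a ∉ A, ∀ b ∉ B, (a, b) ∉ S) : μ.prod ν S ≤ μ A + ν B := by
  have hS : S ⊆ A ×ˢ Set.univ ∪ Set.univ ×ˢ B := fun p hp => by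
    by_contra hout
    simp only [Set.mem_union, Set.mem_prod, Set.mem_univ, and_true, true_and, not_or] at hout
    exact h p.1 hout.1 p.2 hout.2 hp
  refine (measure_mono hS).trans ((measure_union_le _ _).trans (le_of_eq ?_))
  rw [Measure.prod_prod, Measure.prod_prod, measure_univ, measure_univ, mul_one, one_mul]

/-- The OST support estimate `Ŝ`; the sum is `(Φᴴ y)_i`. -/
def thresholdSupport {N C : ℕ} (Φ : Matrix (Fin N) (Fin C) ℂ) (y : Fin N → ℂ) (lam : ℝ) :
    Set (Fin C) :=
  {i | lam < ‖∑ n, (starRingEnd ℂ) (Φ n i) * y n‖}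

lemma sum_conj_mul_signal_add_noise {N C k : ℕ} (Φ : Matrix (Fin N) (Fin C) ℂ)
    (f : Fin k → Fin C) (z : Fin k → ℂ) (η : Fin N → ℂ) (i : Fin C) :
    ∑ n, (starRingEnd ℂ) (Φ n i) * ((∑ j, Φ n (f j) * z j) + η n) =
      (∑ j, colIP Φ i (f j) * z j) + ∑ n, (starRingEnd ℂ) (Φ n i) * η n := by
  simp only [mul_add, Finset.sum_add_distrib, Finset.mul_sum, colIP, Finset.sum_mul]
  rw [Finset.sum_comm]
  simp only [mul_assoc]

lemma thresholdSupport_eq_range {N C k : ℕ} {Φ : Matrix (Fin N) (Fin C) ℂ}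
    {f : Fin k → Fin C} {z : Fin k → ℂ} {η : Fin N → ℂ} {ε t lam : ℝ}
    (hon : ∀ j, ‖(∑ j', colIP Φ (f j) (f j') * z j') - z j‖ ≤ ε)
    (hoff : ∀ i ∉ Set.range f, ‖∑ j, colIP Φ i (f j) * z j‖ ≤ ε)
    (hnoise : ∀ i, ‖∑ n, (starRingEnd ℂ) (Φ n i) * η n‖ ≤ t)
    (hlam : ε + t ≤ lam) (hmin : ∀ j, 2 * lam < ‖z j‖) :
    thresholdSupport Φ (fun n => (∑ j, Φ n (f j) * z j) + η n) lam = Set.range f := by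
  ext i
  simp only [thresholdSupport, Set.mem_ofPred_eq, sum_conj_mul_signal_add_noise]
  constructor
  · intro hi
    by_contra hoff_i
    linarith [norm_add_le (∑ j, colIP Φ i (f j) * z j) (∑ n, (starRingEnd ℂ) (Φ n i) * η n),
      hoff i hoff_i, hnoise i]
  · rintro ⟨j, rfl⟩
    set S := ∑ j', colIP Φ (f j) (f j') * z j'
    set W := ∑ n, (starRingEnd ℂ) (Φ n (f j)) * η n
    have hz : ‖z j‖ ≤ ‖S + W‖ + ‖S - z j‖ + ‖W‖ :=
      calc ‖z j‖ = ‖(S + W) - (S - z j) - W‖ := by congr 1; ring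
        _ ≤ ‖S + W‖ + ‖S - z j‖ + ‖W‖ :=
          (norm_sub_le _ _).trans (add_le_add_left (norm_sub_le _ _) _)
    linarith [hon j, hnoise (f j), hmin j]

theorem stmt13_general {N C k : ℕ} (hC : 2 ≤ C)
    [Nonempty {f : Fin k → Fin C // Function.Injective f}]
    (Φ : Matrix (Fin N) (Fin C) ℂ) (hunit : ∀ i : Fin C, colIP Φ i i = 1)
    (σ2 : NNReal) (hσ : 0 < σ2) (ε δ : ℝ)
    (hStOC : ∀ z' : Fin k → ℂ,
      (PMF.uniformOfFintype {f : Fin k → Fin C // Function.Injective f}).toMeasure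
        {f | ¬ ((∀ i : Fin k,
              ‖(∑ j, colIP Φ (f.1 i) (f.1 j) * z' j) - z' i‖ ≤
                ε * Real.sqrt (∑ j, ‖z' j‖ ^ 2)) ∧
            ∀ i : Fin C, i ∉ Set.range f.1 →
              ‖∑ j, colIP Φ i (f.1 j) * z' j‖ ≤ ε * Real.sqrt (∑ j, ‖z' j‖ ^ 2))} ≤
        ENNReal.ofReal δ)
    (z : Fin k → ℂ) (hz2 : ∑ j, ‖z j‖ ^ 2 = 1)
    (lam : ℝ) (hlam : lam = 2 * max ε (2 * Real.sqrt ((σ2 : ℝ) * Real.log C)))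
    (hmin : ∀ j, 2 * lam < ‖z j‖) :
    ((PMF.uniformOfFintype {f : Fin k → Fin C // Function.Injective f}).toMeasure.prod
        (Measure.pi fun _ : Fin N => complexGaussian σ2))
      {p | {i : Fin C | lam <
          ‖∑ n, (starRingEnd ℂ) (Φ n i) * ((∑ j, Φ n (p.1.1 j) * z j) + p.2 n)‖} ≠
        Set.range p.1.1} ≤
      ENNReal.ofReal δ +
        ENNReal.ofReal (2 / (Real.sqrt (2 * Real.pi * Real.log C) * C)) := by
  have hεt : ε + 2 * √((σ2 : ℝ) * Real.log C) ≤ lam := by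
    rw [hlam]
    linarith [le_max_left ε (2 * √((σ2 : ℝ) * Real.log C)),
      le_max_right ε (2 * √((σ2 : ℝ) * Real.log C))]
  have hsupport := hStOC z
  rw [hz2, Real.sqrt_one, mul_one] at hsupport
  refine (Measure.prod_le_add_of_forall_notMem ?_).trans
    (add_le_add hsupport (pi_complexGaussian_exists_lt_norm_le hC hunit hσ))
  intro f hf η hη
  simp only [Set.mem_ofPred_eq, not_not, not_exists, not_lt] at hf hη
  exact not_not.mpr (thresholdSupport_eq_range hf.1 hf.2 hη hεt hmin)

/-- (OST success probability, Lemma 1) If `Φ` satisfies the `(k,ε,δ)`-StOC, the support of `α`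
is a uniformly random ordered `k`-subset carrying fixed values `z` with `‖z‖₂ = 1`, the noise
`η ~ CN(0,σ²I)` is independent of the support, `λ = 2 max{ε, 2√(σ² log C)}` and
`α_min > 2λ`, then `Pr(Ŝ ≠ Π) ≤ δ + 2(√(2π log C)·C)⁻¹`. -/
theorem stmt13 {N C k : ℕ} (hC : 2 ≤ C)
    [Nonempty {f : Fin k → Fin C // Function.Injective f}]
    (Φ : Matrix (Fin N) (Fin C) ℂ) (hunit : ∀ i : Fin C, colIP Φ i i = 1)
    (σ2 : NNReal) (hσ : 0 < σ2) (ε δ : ℝ) (hε : 0 ≤ ε) (hδ : 0 ≤ δ)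
    (hStOC : ∀ z' : Fin k → ℂ,
      (PMF.uniformOfFintype {f : Fin k → Fin C // Function.Injective f}).toMeasure
        {f | ¬ ((∀ i : Fin k,
              ‖(∑ j, colIP Φ (f.1 i) (f.1 j) * z' j) - z' i‖ ≤
                ε * Real.sqrt (∑ j, ‖z' j‖ ^ 2)) ∧
            ∀ i : Fin C, i ∉ Set.range f.1 →
              ‖∑ j, colIP Φ i (f.1 j) * z' j‖ ≤ ε * Real.sqrt (∑ j, ‖z' j‖ ^ 2))} ≤
        ENNReal.ofReal δ)
    (z : Fin k → ℂ) (hz2 : ∑ j, ‖z j‖ ^ 2 = 1)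
    (lam : ℝ) (hlam : lam = 2 * max ε (2 * Real.sqrt ((σ2 : ℝ) * Real.log C)))
    (hmin : ∀ j, 2 * lam < ‖z j‖) :
    ((PMF.uniformOfFintype {f : Fin k → Fin C // Function.Injective f}).toMeasure.prod
        (Measure.pi fun _ : Fin N => complexGaussian σ2))
      {p | {i : Fin C | lam <
          ‖∑ n, (starRingEnd ℂ) (Φ n i) * ((∑ j, Φ n (p.1.1 j) * z j) + p.2 n)‖} ≠
        Set.range p.1.1} ≤
      ENNReal.ofReal δ +
        ENNReal.ofReal (2 / (Real.sqrt (2 * Real.pi * Real.log C) * C)) :=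
  stmt13_general hC Φ hunit σ2 hσ ε δ hStOC z hz2 lam hlam hmin
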